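/- Let d ≥ 1 and let α, β > 0. Define V : ℝ^d → ℝ by V(x) = (1 + β|x|²)e^{α|x|²}, set ε₀ = √β/√(α² + dαβ), and define u : ℝ^d → ℝ by u(x) = (ε₀α/√β)e^{−α|x|²/2}. Then u is a positive smooth solution of the elliptic equation −ε₀²Δu + V(x)u³ − u = 0 on ℝ^d. -/

import Mathlib

open MeasureTheory RealInnerProductSpace

noncomputable section

/-- `ℝ^d` as a Euclidean space. -/
abbrev E (d : ℕ) := EuclideanSpace ℝ (Fin d)

/-- The Laplacian `Δf` of a scalar function on `ℝ^d`. -/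
def lapl {d : ℕ} (f : E d → ℝ) (x : E d) : ℝ :=
  ∑ i : Fin d,
    fderiv ℝ (fun y => fderiv ℝ f y (EuclideanSpace.single i 1)) x (EuclideanSpace.single i 1)

/-- The divergence of a vector field on `ℝ^d`. -/
def diverg {d : ℕ} (W : E d → E d) (x : E d) : ℝ :=
  ∑ i : Fin d, fderiv ℝ W x (EuclideanSpace.single i 1) i

/-- The `L^p` norm of a function on `ℝ^d`. -/
def LpNorm {d : ℕ} {F : Type*} [NormedAddCommGroup F] (p : ENNReal) (f : E d → F) : ℝ :=
  (eLpNorm f p volume).toReal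

/-- Membership in the Sobolev space `H¹(ℝ^d)`: `f` and its gradient are square integrable. -/
def MemH1 {d : ℕ} (f : E d → ℝ) : Prop :=
  Differentiable ℝ f ∧ MemLp f 2 volume ∧ MemLp (gradient f) 2 volume

/-- The `H¹(ℝ^d)` norm: `‖f‖_{H¹}² = ‖f‖_{L²}² + ‖∇f‖_{L²}²`. -/
def H1Norm {d : ℕ} (f : E d → ℝ) : ℝ :=
  Real.sqrt (LpNorm 2 f ^ 2 + LpNorm 2 (gradient f) ^ 2)

/-- A vector field belongs to `H^k(ℝ^d)`: all derivatives up to order `k` are in `L²`. -/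
def VecMemHk {d : ℕ} (k : ℕ) (W : E d → E d) : Prop :=
  ∀ i ≤ k, MemLp (fun x => ‖iteratedFDeriv ℝ i W x‖) 2 volume

/-- The source term `F = √V Δ(1/√V) = -ΔV/(2V) + 3|∇V|²/(4V²)`. -/
def Fsrc {d : ℕ} (V : E d → ℝ) (x : E d) : ℝ :=
  -(lapl V x) / (2 * V x) + 3 * ‖gradient V x‖ ^ 2 / (4 * V x ^ 2)

/-- Weak solution of the elliptic equation `-ε²Δu + V u³ - u = 0`,
tested against smooth compactly supported functions. -/
def IsWeakSolution {d : ℕ} (ε : ℝ) (V u : E d → ℝ) : Prop :=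
  ∀ w : E d → ℝ, ContDiff ℝ (⊤ : ℕ∞) w → HasCompactSupport w →
    ∫ x, (ε ^ 2 * ⟪gradient u x, gradient w x⟫ + (V x * u x ^ 3 - u x) * w x) = 0

/-- Weak solution of `2u - ε²Δu - ε²(|∇V|²/(4V²))u = f`, tested against `H¹` functions. -/
def WeakSolL {d : ℕ} (ε : ℝ) (V f u : E d → ℝ) : Prop :=
  ∀ w : E d → ℝ, MemH1 w →
    ∫ x, (2 * u x * w x + ε ^ 2 * ⟪gradient u x, gradient w x⟫
      - ε ^ 2 * (‖gradient V x‖ ^ 2 / (4 * V x ^ 2)) * u x * w x) = ∫ x, f x * w x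
lemma lapl_gaussian (d : ℕ) (α c : ℝ) (u : E d → ℝ)
    (hudef : ∀ x, u x = c * Real.exp (-α * ‖x‖ ^ 2 / 2)) (x : E d) :
    lapl u x = (α^2 * ‖x‖^2 - d * α) * u x := by
  have hu' : ∀ y : E d, HasFDerivAt u (((-α) * u y) • (innerSL ℝ y : E d →L[ℝ] ℝ)) y := by
    intro y
    have h1 : HasFDerivAt (fun z : E d => ‖z‖ ^ 2) ((2:ℕ) • (innerSL ℝ y)) y :=
      (hasFDerivAt_id y).norm_sq
    have h3 : HasFDerivAt (fun z : E d => -α * ‖z‖ ^ 2 / 2) ((-α) • (innerSL ℝ y)) y := by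
      have := (h1.const_mul (-α)).const_mul (2⁻¹ : ℝ)
      have h4 : HasFDerivAt (fun z : E d => 2⁻¹ * (-α * ‖z‖ ^ 2)) ((-α) • (innerSL ℝ y)) y := by
        refine this.congr_fderiv ?_
        ext v
        simp; ring
      exact h4.congr_of_eventuallyEq (Filter.Eventually.of_forall fun z => by ring)
    have h2 := (h3.exp).const_mul c
    have hcoef : (c * (Real.exp (-α * ‖y‖^2/2) * -α)) = -α * u y := by rw [hudef]; ring
    have h5 : HasFDerivAt (fun z : E d => c * Real.exp (-α * ‖z‖ ^ 2 / 2))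
        ((-α * u y) • (innerSL ℝ y)) y := by
      refine h2.congr_fderiv ?_
      rw [← hcoef, smul_smul, smul_smul, mul_assoc]
    exact h5.congr_of_eventuallyEq (Filter.Eventually.of_forall fun z => (hudef z))
  have hxi : ∀ (y : E d) (i : Fin d), fderiv ℝ u y (EuclideanSpace.single i 1) = -α * u y * y i := by
    intro y i
    rw [(hu' y).fderiv]
    simp [EuclideanSpace.inner_single_right]
  unfold lapl
  have key : ∀ i : Fin d,
      fderiv ℝ (fun y => fderiv ℝ u y (EuclideanSpace.single i 1)) x (EuclideanSpace.single i 1)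
      = α^2 * u x * (x i)^2 - α * u x := by
    intro i
    have heq : (fun y => fderiv ℝ u y (EuclideanSpace.single i 1)) = fun y => -α * (u y * y i) := by
      funext y; rw [hxi y i]; ring
    rw [heq]
    have hproj : HasFDerivAt (fun y : E d => y i) (EuclideanSpace.proj (𝕜 := ℝ) i) x := by
      simpa using (EuclideanSpace.proj (𝕜 := ℝ) (i := i)).hasFDerivAt (x := x)
    have hp := ((hu' x).mul hproj).const_mul (-α)
    rw [HasFDerivAt.fderiv (f := fun y : E d => -α * (u y * y i)) hp]
    simp [EuclideanSpace.inner_single_right]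
    ring
  rw [Finset.sum_congr rfl fun i _ => key i]
  have hnorm : ‖x‖^2 = ∑ i, (x i)^2 := by
    rw [EuclideanSpace.norm_sq_eq]
    simp [sq]
  rw [Finset.sum_sub_distrib, Finset.sum_const]
  rw [show ∀ s : Finset (Fin d), (∑ i ∈ s, α^2*u x*(x i)^2) = α^2*u x*(∑ i ∈ s, (x i)^2) from fun s => by rw [Finset.mul_sum]]
  rw [← hnorm]
  simp
  ring

/-- exact Gaussian solution: for `V(x) = (1 + β|x|²)e^{α|x|²}` with
`α, β > 0`, `ε₀ = √β/√(α² + dαβ)` and `u(x) = (ε₀α/√β)e^{-α|x|²/2}`, the function `u`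
is a positive smooth solution of `-ε₀²Δu + Vu³ - u = 0` on `ℝ^d`. -/
theorem exact_gaussian_solution
    (d : ℕ) (hd : 1 ≤ d) (α β : ℝ) (hα : 0 < α) (hβ : 0 < β)
    (V u : E d → ℝ) (ε₀ : ℝ)
    (hVdef : ∀ x, V x = (1 + β * ‖x‖ ^ 2) * Real.exp (α * ‖x‖ ^ 2))
    (hε₀ : ε₀ = Real.sqrt β / Real.sqrt (α ^ 2 + d * α * β))
    (hudef : ∀ x, u x = ε₀ * α / Real.sqrt β * Real.exp (-α * ‖x‖ ^ 2 / 2)) :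
    (∀ x, 0 < u x) ∧ ContDiff ℝ (⊤ : ℕ∞) u ∧
      ∀ x, -ε₀ ^ 2 * lapl u x + V x * u x ^ 3 - u x = 0 := by
  set c : ℝ := ε₀ * α / Real.sqrt β with hc
  have hs : 0 < α ^ 2 + d * α * β := by positivity
  have hε₀pos : 0 < ε₀ := by
    rw [hε₀]; positivity
  have hcpos : 0 < c := by
    rw [hc]; positivity
  have hε2 : ε₀ ^ 2 = β / (α ^ 2 + d * α * β) := by
    rw [hε₀, div_pow, Real.sq_sqrt hβ.le, Real.sq_sqrt hs.le]
  have hc2 : c ^ 2 = ε₀ ^ 2 * α ^ 2 / β := by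
    rw [hc, div_pow, mul_pow, Real.sq_sqrt hβ.le]
  refine ⟨fun x => by rw [hudef x]; positivity, ?_, ?_⟩
  · have hfun : u = fun x => c * Real.exp (-α * ‖x‖ ^ 2 / 2) := funext hudef
    rw [hfun]
    have h1 : ContDiff ℝ (⊤ : ℕ∞) fun x : E d => -α * ‖x‖ ^ 2 / 2 :=
      (contDiff_const.mul (contDiff_norm_sq (𝕜 := ℝ))).div_const 2
    exact contDiff_const.mul (Real.contDiff_exp.comp h1)
  · intro x
    rw [lapl_gaussian d α c u hudef x, hVdef x, hudef x]
    set A := Real.exp (α * ‖x‖ ^ 2) with hA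
    set B := Real.exp (-α * ‖x‖ ^ 2 / 2) with hB
    have hAB : A * B ^ 3 = B := by
      rw [hA, hB, ← Real.exp_nat_mul, ← Real.exp_add]
      congr 1
      push_cast
      ring
    have hc3 : c ^ 3 = c * (ε₀ ^ 2 * α ^ 2 / β) := by
      rw [← hc2, pow_succ, pow_two, mul_comm]
    have expand : (1 + β * ‖x‖ ^ 2) * A * (c * B) ^ 3 = c ^ 3 * (1 + β * ‖x‖ ^ 2) * B := by
      rw [mul_pow,
        show (1 + β * ‖x‖ ^ 2) * A * (c ^ 3 * B ^ 3) = c ^ 3 * (1 + β * ‖x‖ ^ 2) * (A * B ^ 3)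
          from by ring, hAB]
    rw [expand, hc3, hε2]
    field_simp
    ring
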